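/- There exists a constant M1, depending only on k and the parameters (v_1,...,v_k), (p_1,...,p_k) (and in particular independent of B and N), such that for every capacity B ∈ ℕ and every arrival count vector N ∈ ℕ^k, OPT(N) − IND(N) ≤ M1, where OPT(N) is the maximum of f over all x ∈ ℕ^k with x ≤ N (with past counts y = 0), and IND(N) is the maximum of f over all index solutions x ∈ ℕ^k with x ≤ N (with past counts y = 0). -/
import Mathlib


open Finset

/-- PMF of a Binomial(m, p) random variable at value `s`. -/
noncomputable def binomPMF (p : ℝ) (m s : ℕ) : ℝ :=
  (m.choose s : ℝ) * p ^ s * (1 - p) ^ (m - s)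

/-- Expectation of `g` applied to a vector of independent binomial random variables,
where coordinate `j` is Binomial(x j, p j). -/
noncomputable def jointExp {k : ℕ} (p : Fin k → ℝ) (x : Fin k → ℕ)
    (g : (Fin k → ℕ) → ℝ) : ℝ :=
  ∑ a ∈ Fintype.piFinset (fun j => Finset.range (x j + 1)),
    (∏ j, binomPMF (p j) (x j) (a j)) * g a

open Classical in
/-- Probability of the event `E` for a vector of independent binomial random
variables, coordinate `j` being Binomial(x j, p j). -/
noncomputable def jointProb {k : ℕ} (p : Fin k → ℝ) (x : Fin k → ℕ)
    (E : (Fin k → ℕ) → Prop) : ℝ :=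
  jointExp p x (fun a => if E a then 1 else 0)

/-- P[S(x) ≥ B], where S(x) = Σ_j X_{j, x_j} is Poisson binomial. -/
noncomputable def showTail {k : ℕ} (p : Fin k → ℝ) (x : Fin k → ℕ) (B : ℕ) : ℝ :=
  jointProb p x (fun a => B ≤ ∑ j, a j)

/-- Expected compensation V_B(x) = E[(S(x) − B)^+]. -/
noncomputable def VB {k : ℕ} (p : Fin k → ℝ) (B : ℕ) (x : Fin k → ℕ) : ℝ :=
  jointExp p x (fun a => max ((∑ j, a j : ℝ) - B) 0)

/-- Objective of the offline problem with past accepted counts `y`: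
f(x) = Σ_j v_j (y_j + x_j) − V_B(y + x). -/
noncomputable def objFn {k : ℕ} (v p : Fin k → ℝ) (B : ℕ) (y x : Fin k → ℕ) : ℝ :=
  ∑ j, v j * ((y j : ℝ) + (x j : ℝ)) - VB p B (fun j => y j + x j)

/-- Feasibility for the offline problem with demand bounds `n`. -/
def Feasible {k : ℕ} (n x : Fin k → ℕ) : Prop := ∀ j, x j ≤ n j

/-- `x` is locally optimal at `j`: `x j` is the largest element of the argmax,
over `z ∈ {0,…,n j}`, of `z · v_j − V_B(y + x + (z − x_j)·e_j)`. -/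
def LocallyOpt {k : ℕ} (v p : Fin k → ℝ) (B : ℕ) (n y : Fin k → ℕ)
    (x : Fin k → ℕ) (j : Fin k) : Prop :=
  ∀ z ≤ n j,
    ((z : ℝ) * v j - VB p B (fun i => y i + Function.update x j z i)
        ≤ (x j : ℝ) * v j - VB p B (fun i => y i + x i)) ∧
    (x j < z →
      (z : ℝ) * v j - VB p B (fun i => y i + Function.update x j z i)
        < (x j : ℝ) * v j - VB p B (fun i => y i + x i))

/-- `t` witnesses that `x` is an index solution for bounds `n`:
all bounds exhausted below `t`, nothing accepted above `t`. -/
def IndexWitness {k : ℕ} (n x : Fin k → ℕ) (t : Fin k) : Prop :=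
  (∀ j, j < t → x j = n j) ∧ (∀ j, t < j → x j = 0)

/-- `x` is an index solution for bounds `n`. -/
def IsIndexSol {k : ℕ} (n x : Fin k → ℕ) : Prop := ∃ t, IndexWitness n x t

/-- `t` is the (smallest possible) threshold index of the index solution `x`. -/
def ThresholdIndex {k : ℕ} (n x : Fin k → ℕ) (t : Fin k) : Prop :=
  IndexWitness n x t ∧ ∀ t' : Fin k, t' < t → ¬ IndexWitness n x t'

/-- Optimal value of the offline problem with past counts `y` and bounds `n`. -/
noncomputable def OptVal {k : ℕ} (v p : Fin k → ℝ) (B : ℕ) (y n : Fin k → ℕ) : ℝ :=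
  sSup {r : ℝ | ∃ x, Feasible n x ∧ r = objFn v p B y x}

/-- Optimal value of the offline problem restricted to index solutions. -/
noncomputable def IndOptVal {k : ℕ} (v p : Fin k → ℝ) (B : ℕ) (y n : Fin k → ℕ) : ℝ :=
  sSup {r : ℝ | ∃ x, Feasible n x ∧ IsIndexSol n x ∧ r = objFn v p B y x}


/- ### Auxiliary development -/

section Binom

variable {p : ℝ} (hp0 : 0 < p) (hp1 : p < 1)

lemma binomPMF_nonneg (hp0 : 0 ≤ p) (hp1 : p ≤ 1) (m s : ℕ) : 0 ≤ binomPMF p m s := by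
  unfold binomPMF
  have : (0:ℝ) ≤ 1 - p := by linarith
  positivity

lemma binomPMF_eq_zero {m s : ℕ} (h : m < s) : binomPMF p m s = 0 := by
  unfold binomPMF
  rw [Nat.choose_eq_zero_of_lt h]
  simp

lemma binomPMF_sum (p : ℝ) (m : ℕ) : ∑ s ∈ range (m+1), binomPMF p m s = 1 := by
  have h := add_pow p (1-p) m
  have h1 : p + (1-p) = 1 := by ring
  rw [h1, one_pow] at h
  rw [h]
  apply Finset.sum_congr rfl
  intro s _
  unfold binomPMF
  ring

/-- The fundamental ratio identity. -/
lemma binom_ratio (p : ℝ) (n s : ℕ) :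
    binomPMF p n (s+1) * ((s+1 : ℝ) * (1-p)) = binomPMF p n s * (((n - s : ℕ) : ℝ) * p) := by
  rcases lt_or_ge s n with h | h
  · have hd : n - s = (n - (s+1)) + 1 := by omega
    have hc : (n.choose (s+1) * (s+1) : ℝ) = (n.choose s * (n - s : ℕ) : ℝ) := by
      exact_mod_cast congrArg (Nat.cast (R := ℝ)) (Nat.choose_succ_right_eq n s)
    rw [hd] at hc
    unfold binomPMF
    rw [hd, pow_succ, pow_succ]
    push_cast at hc ⊢
    linear_combination (p ^ s * p * (1 - p) ^ (n - (s+1)) * (1 - p)) * hc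
  · have h1 : n < s + 1 := by omega
    have h2 : n - s = 0 := by omega
    rw [binomPMF_eq_zero h1, h2]
    simp

end Binom

section Ratio

variable {p : ℝ}

lemma binom_step_up (hp0 : 0 < p) (hp1 : p < 1) {n s : ℕ} (h : (s:ℝ)+1 ≤ (n:ℝ) * p) :
    binomPMF p n s ≤ binomPMF p n (s+1) := by
  have hq : (0:ℝ) < 1 - p := by linarith
  have hn0 : 0 < n := by
    by_contra hn
    have : n = 0 := by omega
    subst this; simp at h; nlinarith [Nat.cast_nonneg (α := ℝ) s]
  have hsn : s < n := by
    have hn0' : (0:ℝ) < (n:ℝ) := by exact_mod_cast hn0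
    have h2 : (s:ℝ) < (n:ℝ) := by nlinarith
    exact_mod_cast h2
  have hcast : ((n - s : ℕ) : ℝ) = (n:ℝ) - (s:ℝ) := by
    push_cast [Nat.cast_sub hsn.le]; ring
  have key := binom_ratio p n s
  rw [hcast] at key
  have hb := binomPMF_nonneg hp0.le hp1.le n s
  have hineq : ((s:ℝ)+1) * (1-p) ≤ ((n:ℝ) - s) * p := by nlinarith
  have hA : (0:ℝ) < ((s:ℝ)+1) * (1-p) := by positivity
  nlinarith [mul_le_mul_of_nonneg_left hineq hb]

lemma binom_step_down (hp0 : 0 < p) (hp1 : p < 1) {n s : ℕ} (h : (n:ℝ) * p ≤ (s:ℝ)) :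
    binomPMF p n (s+1) ≤ binomPMF p n s := by
  have hq : (0:ℝ) < 1 - p := by linarith
  rcases le_or_gt n s with hns | hns
  · rw [binomPMF_eq_zero (by omega)]
    exact binomPMF_nonneg hp0.le hp1.le n s
  · have hcast : ((n - s : ℕ) : ℝ) = (n:ℝ) - (s:ℝ) := by
      push_cast [Nat.cast_sub hns.le]; ring
    have key := binom_ratio p n s
    rw [hcast] at key
    have hb := binomPMF_nonneg hp0.le hp1.le n s
    have hineq : ((n:ℝ) - s) * p ≤ ((s:ℝ)+1) * (1-p) := by nlinarith
    have hA : (0:ℝ) < ((s:ℝ)+1) * (1-p) := by positivity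
    nlinarith [mul_le_mul_of_nonneg_left hineq hb]

lemma binom_step_decay (hp0 : 0 < p) (hp1 : p < 1) {n s : ℕ} {c : ℝ} (hc : 0 < c)
    (h1 : (s:ℝ)+1 ≤ (n:ℝ) * p + c) (h2 : s < n) (hE : c ≤ (n:ℝ)*p*(1-p)) :
    (1 - c/((n:ℝ)*p*(1-p))) * binomPMF p n s ≤ binomPMF p n (s+1) := by
  have hq : (0:ℝ) < 1 - p := by linarith
  have hn0 : (0:ℝ) < (n:ℝ) := by
    have : 0 < n := by omega
    exact_mod_cast this
  have hnpq : (0:ℝ) < (n:ℝ)*p*(1-p) := by positivity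
  set E : ℝ := c/((n:ℝ)*p*(1-p)) with hEdef
  have hE0 : 0 ≤ E := by positivity
  have hE1 : E ≤ 1 := by rw [hEdef]; rw [div_le_one hnpq]; exact hE
  have hEc : E * ((n:ℝ)*p*(1-p)) = c := div_mul_cancel₀ c (ne_of_gt hnpq)
  have hcast : ((n - s : ℕ) : ℝ) = (n:ℝ) - (s:ℝ) := by
    push_cast [Nat.cast_sub h2.le]; ring
  have key := binom_ratio p n s
  rw [hcast] at key
  have hb := binomPMF_nonneg hp0.le hp1.le n s
  -- main inequality: (1-E)*((s+1)*(1-p)) ≤ ((n:ℝ)-s)*p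
  have hineq : (1-E) * (((s:ℝ)+1) * (1-p)) ≤ ((n:ℝ) - s) * p := by
    nlinarith [mul_nonneg (sub_nonneg.mpr hE1) (sub_nonneg.mpr h1),
      mul_nonneg hE0 hc.le, mul_nonneg (mul_nonneg hE0 hc.le) hq.le]
  have hA : (0:ℝ) < ((s:ℝ)+1) * (1-p) := by positivity
  nlinarith [mul_le_mul_of_nonneg_left hineq hb]

end Ratio

section Anticonc

variable {p : ℝ}

/-- Sum of `h'` pmf values starting at `a`, all at least `d`, is at most 1. -/
lemma binom_window (hp0 : 0 < p) (hp1 : p < 1) {n a h' : ℕ} {d : ℝ}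
    (hsub : a + h' ≤ n + 1) (hall : ∀ t, t < h' → d ≤ binomPMF p n (a+t)) :
    (h' : ℝ) * d ≤ 1 := by
  have h1 : ∑ s ∈ Finset.Ico a (a+h'), binomPMF p n s ≤ ∑ s ∈ range (n+1), binomPMF p n s := by
    apply Finset.sum_le_sum_of_subset_of_nonneg
    · intro x hx
      rw [Finset.mem_Ico] at hx
      rw [Finset.mem_range]
      omega
    · intro i _ _
      exact binomPMF_nonneg hp0.le hp1.le n i
  rw [binomPMF_sum] at h1
  have h2 : (Finset.Ico a (a+h')).card • d ≤ ∑ s ∈ Finset.Ico a (a+h'), binomPMF p n s := by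
    apply Finset.card_nsmul_le_sum
    intro x hx
    rw [Finset.mem_Ico] at hx
    have := hall (x - a) (by omega)
    rwa [show a + (x - a) = x from by omega] at this
  rw [Nat.card_Ico, show a + h' - a = h' from by omega, nsmul_eq_mul] at h2
  linarith

set_option maxHeartbeats 2000000 in
theorem binom_anticonc (hp0 : 0 < p) (hp1 : p < 1) {δ : ℝ} (hδ : 0 < δ) :
    ∃ R : ℕ, ∀ n s : ℕ, δ ≤ binomPMF p n s → n ≤ R := by
  have hq : (0:ℝ) < 1 - p := by linarith
  obtain ⟨h, hh2⟩ : ∃ h : ℕ, (2:ℝ) < (h:ℝ) * δ := by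
    refine ⟨⌈2/δ⌉₊ + 1, ?_⟩
    have h1 : (2/δ : ℝ) ≤ ⌈2/δ⌉₊ := Nat.le_ceil _
    have h2 : ((⌈2/δ⌉₊ + 1 : ℕ):ℝ) = (⌈2/δ⌉₊ : ℝ) + 1 := by push_cast; ring
    rw [h2]
    have : 2/δ * δ = 2 := by field_simp
    nlinarith
  have hhpos : (0:ℝ) < h := by nlinarith
  set c : ℝ := 2*(h:ℝ) + 2 with hcdef
  have hc : 0 < c := by positivity
  obtain ⟨R, hR⟩ := exists_nat_gt ((2*c*(h:ℝ) + 2*(h:ℝ) + c + 5)/(p*(1-p)))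
  refine ⟨R, ?_⟩
  intro n s₀ hs₀
  by_contra hn
  have hnR : R < n := by omega
  have hrnR : ((2*c*(h:ℝ) + 2*(h:ℝ) + c + 5)/(p*(1-p))) < (n:ℝ) := by
    have : (R:ℝ) < (n:ℝ) := by exact_mod_cast hnR
    linarith
  have hpq : (0:ℝ) < p*(1-p) := by positivity
  have hbig : 2*c*(h:ℝ) + 2*(h:ℝ) + c + 5 < (n:ℝ)*(p*(1-p)) := by
    rw [div_lt_iff₀ hpq] at hrnR
    linarith
  have hnpq : 2*c*(h:ℝ) + 2*(h:ℝ) + c + 5 < (n:ℝ)*p*(1-p) := by nlinarith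
  have hrn0 : (0:ℝ) < (n:ℝ) := by nlinarith
  have hsplit : (n:ℝ)*p = (n:ℝ) - (n:ℝ)*(1-p) := by ring
  have hFq : 2*(h:ℝ) + 2 ≤ (n:ℝ)*(1-p) := by
    have h1 : (n:ℝ)*p*(1-p) ≤ (n:ℝ)*(1-p) := by
      nlinarith [mul_nonneg (mul_nonneg hrn0.le hq.le) hq.le]
    nlinarith [mul_pos hc hhpos]
  have hFc : c ≤ (n:ℝ)*p*(1-p) := by nlinarith
  have hnppos : (0:ℝ) < (n:ℝ)*p*(1-p) := by positivity
  have hFE : (h:ℝ) * (c/((n:ℝ)*p*(1-p))) ≤ 1/2 := by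
    have heq : (h:ℝ) * (c/((n:ℝ)*p*(1-p))) = ((h:ℝ)*c)/((n:ℝ)*p*(1-p)) := by ring
    rw [heq, div_le_iff₀ hnppos]
    nlinarith
  rcases le_or_gt ((s₀:ℝ)) ((n:ℝ)*p + h) with hcase | hcase
  · -- Case B : s₀ near or left of np. Build start point a and use decay.
    obtain ⟨a, ha_ub, ha_start⟩ : ∃ a : ℕ, (a:ℝ) ≤ (n:ℝ)*p + h ∧ δ ≤ binomPMF p n a := by
      have hfl_le : ((⌊(n:ℝ)*p⌋₊ : ℕ):ℝ) ≤ (n:ℝ)*p := Nat.floor_le (by positivity)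
      refine ⟨max s₀ ⌊(n:ℝ)*p⌋₊, ?_, ?_⟩
      · rw [Nat.cast_max]
        exact max_le hcase (by linarith)
      · rcases le_or_gt ⌊(n:ℝ)*p⌋₊ s₀ with hfs | hfs
        · rwa [max_eq_left hfs]
        · rw [max_eq_right hfs.le]
          have up : ∀ d : ℕ, s₀ + d ≤ ⌊(n:ℝ)*p⌋₊ → δ ≤ binomPMF p n (s₀ + d) := by
            intro d
            induction d with
            | zero => intro _; simpa using hs₀
            | succ d ih =>
              intro hd
              have prev := ih (by omega)
              have hstep : (↑(s₀+d):ℝ) + 1 ≤ (n:ℝ)*p := by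
                have h1 : ((s₀ + d + 1 : ℕ):ℝ) ≤ ((⌊(n:ℝ)*p⌋₊:ℕ):ℝ) := by exact_mod_cast hd
                push_cast at h1 ⊢
                linarith
              have := binom_step_up hp0 hp1 hstep
              calc δ ≤ binomPMF p n (s₀+d) := prev
                _ ≤ binomPMF p n (s₀+d+1) := this
          have := up (⌊(n:ℝ)*p⌋₊ - s₀) (by omega)
          rwa [show s₀ + (⌊(n:ℝ)*p⌋₊ - s₀) = ⌊(n:ℝ)*p⌋₊ from by omega] at this
    set E : ℝ := c/((n:ℝ)*p*(1-p)) with hEdef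
    have hE0 : 0 ≤ E := by positivity
    have hE1 : E ≤ 1 := by
      rw [hEdef, div_le_one hnppos]; exact hFc
    have decay : ∀ t : ℕ, t ≤ h → δ * (1-E)^t ≤ binomPMF p n (a+t) := by
      intro t
      induction t with
      | zero => intro _; simpa using ha_start
      | succ t ih =>
        intro ht
        have prev := ih (by omega)
        have htR : (t:ℝ) + 1 ≤ (h:ℝ) := by exact_mod_cast ht
        have hs1 : (↑(a+t):ℝ) + 1 ≤ (n:ℝ)*p + c := by
          push_cast
          rw [hcdef]
          linarith
        have hs2 : a + t < n := by
          have h1 : (↑(a+t):ℝ) < (n:ℝ) := by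
            push_cast
            linarith
          exact_mod_cast h1
        have hstep := binom_step_decay hp0 hp1 hc hs1 hs2 hFc
        rw [← hEdef] at hstep
        have heq : δ * (1-E)^(t+1) = (1-E) * (δ * (1-E)^t) := by ring
        rw [heq, show a + (t+1) = (a+t)+1 from by omega]
        calc (1-E) * (δ * (1-E)^t) ≤ (1-E) * binomPMF p n (a+t) :=
              mul_le_mul_of_nonneg_left prev (by linarith)
          _ ≤ binomPMF p n ((a+t)+1) := hstep
    have hhalf : ∀ t : ℕ, t < h → δ/2 ≤ binomPMF p n (a+t) := by
      intro t ht
      have h1 := decay t ht.le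
      have h2 : (1-E)^h ≤ (1-E)^t := pow_le_pow_of_le_one (by linarith) (by linarith) ht.le
      have h3 : 1 - (h:ℝ)*E ≤ (1-E)^h := by
        have hb := one_add_mul_le_pow (a := -E) (by linarith) h
        calc 1 - (h:ℝ)*E = 1 + (h:ℝ)*(-E) := by ring
          _ ≤ (1 + (-E))^h := hb
          _ = (1-E)^h := by ring_nf
      have h4 : (1:ℝ)/2 ≤ 1 - (h:ℝ)*E := by linarith [hFE]
      have h5 : δ/2 ≤ δ * (1-E)^t := by nlinarith
      linarith
    have hsub : a + h ≤ n + 1 := by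
      have h1 : (a:ℝ) + (h:ℝ) ≤ (n:ℝ) + 1 := by linarith
      exact_mod_cast h1
    have hw := binom_window hp0 hp1 hsub hhalf
    have : (h:ℝ) * (δ/2) = ((h:ℝ)*δ)/2 := by ring
    rw [this] at hw
    linarith
  · -- Case A : s₀ far right of np; pmf is ≥ δ on [⌈np⌉, s₀], window of h points.
    obtain ⟨a, ha_lb, ha_ub⟩ : ∃ a : ℕ, (n:ℝ)*p ≤ (a:ℝ) ∧ (a:ℝ) ≤ (n:ℝ)*p + 1 := by
      refine ⟨⌈(n:ℝ)*p⌉₊, Nat.le_ceil _, ?_⟩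
      have := Nat.ceil_lt_add_one (by positivity : (0:ℝ) ≤ (n:ℝ)*p)
      linarith
    have ddown : ∀ d : ℕ, ∀ s : ℕ, s + d = s₀ → (n:ℝ)*p ≤ (s:ℝ) → δ ≤ binomPMF p n s := by
      intro d
      induction d with
      | zero => intro s hs _; subst hs; simpa using hs₀
      | succ d ih =>
        intro s hs hsp
        have prev := ih (s+1) (by omega) (by push_cast; linarith)
        have := binom_step_down hp0 hp1 hsp
        linarith
    have hall : ∀ t : ℕ, t < h → δ ≤ binomPMF p n (a+t) := by
      intro t ht
      have htR : (t:ℝ) + 1 ≤ (h:ℝ) := by exact_mod_cast ht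
      have hlt : (↑(a+t):ℝ) < (s₀:ℝ) := by
        push_cast
        linarith
      have hlt' : a + t < s₀ := by exact_mod_cast hlt
      apply ddown (s₀ - (a+t)) (a+t) (by omega)
      push_cast
      linarith [Nat.cast_nonneg (α := ℝ) t]
    have hsub : a + h ≤ n + 1 := by
      have h1 : (a:ℝ) + (h:ℝ) ≤ (n:ℝ) + 1 := by linarith
      exact_mod_cast h1
    have hw := binom_window hp0 hp1 hsub hall
    linarith

end Anticonc

/- ### Expectation machinery -/
section JE

variable {k : ℕ} {p : Fin k → ℝ}

/-- Peel one coordinate out of a sum over `piFinset`. -/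
lemma sum_piFinset_peel (r : Fin k → Finset ℕ) (j : Fin k) (F : (Fin k → ℕ) → ℝ) :
    ∑ a ∈ Fintype.piFinset r, F a
      = ∑ t ∈ r j, ∑ a ∈ Fintype.piFinset (Function.update r j {0}),
          F (Function.update a j t) := by
  rw [← Finset.sum_product']
  refine Finset.sum_nbij' (fun a => (a j, Function.update a j 0))
    (fun z => Function.update z.2 j z.1) ?_ ?_ ?_ ?_ ?_
  · intro a ha
    rw [Fintype.mem_piFinset] at ha
    rw [Finset.mem_product]
    constructor
    · exact ha j
    · rw [Fintype.mem_piFinset]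
      intro i
      by_cases hij : i = j
      · subst hij; simp [Function.update_self]
      · show Function.update a j 0 i ∈ Function.update r j {0} i
        rw [Function.update_of_ne hij, Function.update_of_ne hij]
        exact ha i
  · intro z hz
    rw [Finset.mem_product] at hz
    obtain ⟨hz1, hz2⟩ := hz
    rw [Fintype.mem_piFinset] at hz2 ⊢
    intro i
    by_cases hij : i = j
    · subst hij; simpa using hz1
    · show Function.update z.2 j z.1 i ∈ r i
      rw [Function.update_of_ne hij]
      have := hz2 i
      rwa [Function.update_of_ne hij] at this
  · intro a _
    simp [Function.update_idem, Function.update_eq_self]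
  · intro z hz
    rw [Finset.mem_product] at hz
    have hz2 := hz.2
    rw [Fintype.mem_piFinset] at hz2
    have hj0 : z.2 j = 0 := by
      have := hz2 j
      simpa using this
    ext
    · simp [Function.update_self]
    · simp only [Function.update_idem]
      rw [← hj0, Function.update_eq_self]
  · intro a _
    rw [Function.update_idem, Function.update_eq_self]

lemma update_range_eq (x : Fin k → ℕ) (j : Fin k) (m : ℕ) :
    Function.update (fun i => Finset.range (Function.update x j m i + 1)) j ({0} : Finset ℕ)
      = Function.update (fun i => Finset.range (x i + 1)) j ({0} : Finset ℕ) := by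
  funext i
  by_cases hij : i = j
  · subst hij; simp
  · rw [Function.update_of_ne hij, Function.update_of_ne hij, Function.update_of_ne hij]

/-- pointwise product splitting -/
lemma prod_pmf_update (x : Fin k → ℕ) (j : Fin k) (mj : ℕ) (a : Fin k → ℕ) (t : ℕ) :
    (∏ i, binomPMF (p i) (Function.update x j mj i) (Function.update a j t i))
      = binomPMF (p j) mj t * ∏ i ∈ Finset.univ \ {j}, binomPMF (p i) (x i) (a i) := by
  have hfe : (fun i => binomPMF (p i) (Function.update x j mj i) (Function.update a j t i))
      = Function.update (fun i => binomPMF (p i) (x i) (a i)) j (binomPMF (p j) mj t) := by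
    funext i
    by_cases hij : i = j
    · subst hij; simp
    · rw [Function.update_of_ne hij, Function.update_of_ne hij, Function.update_of_ne hij]
  rw [hfe, Finset.prod_update_of_mem (Finset.mem_univ j)]

lemma sum_update_zero (a : Fin k → ℕ) (j : Fin k) (t : ℕ) (h0 : a j = 0) :
    ∑ i, Function.update a j t i = t + ∑ i, a i := by
  rw [Finset.sum_update_of_mem (Finset.mem_univ j)]
  have h1 : ∑ i ∈ Finset.univ \ {j}, a i = ∑ i, a i := by
    rw [← Finset.erase_eq]
    have := Finset.sum_erase_add Finset.univ a (Finset.mem_univ j)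
    rw [h0] at this
    omega
  rw [h1]

/-- single-coordinate binomial recursion under a sum against `H`. -/
lemma binom_rec (pp : ℝ) (m : ℕ) (H : ℕ → ℝ) :
    ∑ t ∈ range (m+2), binomPMF pp (m+1) t * H t
      = pp * ∑ t ∈ range (m+1), binomPMF pp m t * H (t+1)
        + (1-pp) * ∑ t ∈ range (m+1), binomPMF pp m t * H t := by
  rw [Finset.sum_range_succ' (fun t => binomPMF pp (m+1) t * H t) (m+1)]
  have hsplit : ∀ t ∈ range (m+1),
      binomPMF pp (m+1) (t+1) * H (t+1)
        = pp * (binomPMF pp m t * H (t+1))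
          + (1-pp) * (binomPMF pp m (t+1) * H (t+1)) := by
    intro t ht
    rw [Finset.mem_range] at ht
    unfold binomPMF
    rw [Nat.choose_succ_succ]
    have he1 : m + 1 - (t+1) = m - t := by omega
    rcases Nat.lt_or_ge t m with hlt | hge
    · have he2 : m - t = (m - (t+1)) + 1 := by omega
      rw [he1, he2]
      push_cast
      ring
    · have htm : t = m := by omega
      subst htm
      rw [Nat.choose_succ_self]
      have he2 : t - t = 0 := by omega
      rw [he1, he2]
      push_cast
      ring
  rw [Finset.sum_congr rfl hsplit, Finset.sum_add_distrib, ← Finset.mul_sum, ← Finset.mul_sum]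
  -- remaining : pp * Σ b(m,t)H(t+1) + (1-pp) * Σ_{t∈range(m+1)} b(m,t+1)H(t+1) + b(m+1,0)H 0
  --           = pp * Σ b(m,t)H(t+1) + (1-pp) * Σ_{t∈range(m+1)} b(m,t)H t
  have hright : ∑ t ∈ range (m+1), binomPMF pp m t * H t
      = ∑ t ∈ range m, binomPMF pp m (t+1) * H (t+1) + binomPMF pp m 0 * H 0 := by
    rw [Finset.sum_range_succ' (fun t => binomPMF pp m t * H t) m]
  have hext : ∑ t ∈ range (m+1), binomPMF pp m (t+1) * H (t+1)
      = ∑ t ∈ range m, binomPMF pp m (t+1) * H (t+1) := by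
    rw [Finset.sum_range_succ]
    rw [binomPMF_eq_zero (by omega)]
    ring
  have hb0 : binomPMF pp (m+1) 0 = (1-pp) * binomPMF pp m 0 := by
    unfold binomPMF
    simp [pow_succ]
    ring
  rw [hext, hright, hb0]
  ring

end JE

section JE2

variable {k : ℕ} {p : Fin k → ℝ}

lemma jointExp_congr {x : Fin k → ℕ} {g g' : (Fin k → ℕ) → ℝ}
    (h : ∀ a, g a = g' a) : jointExp p x g = jointExp p x g' := by
  unfold jointExp
  exact Finset.sum_congr rfl (fun a _ => by rw [h a])

lemma prod_pmf_nonneg (hp : ∀ j, 0 < p j ∧ p j < 1) (x a : Fin k → ℕ) :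
    0 ≤ ∏ i, binomPMF (p i) (x i) (a i) :=
  Finset.prod_nonneg fun i _ => binomPMF_nonneg (hp i).1.le (hp i).2.le _ _

lemma jointExp_nonneg (hp : ∀ j, 0 < p j ∧ p j < 1) {x : Fin k → ℕ}
    {g : (Fin k → ℕ) → ℝ} (hg : ∀ a, 0 ≤ g a) : 0 ≤ jointExp p x g := by
  unfold jointExp
  exact Finset.sum_nonneg fun a _ => mul_nonneg (prod_pmf_nonneg hp x a) (hg a)

lemma jointExp_mono (hp : ∀ j, 0 < p j ∧ p j < 1) {x : Fin k → ℕ}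
    {g g' : (Fin k → ℕ) → ℝ} (hg : ∀ a, g a ≤ g' a) :
    jointExp p x g ≤ jointExp p x g' := by
  unfold jointExp
  exact Finset.sum_le_sum fun a _ =>
    mul_le_mul_of_nonneg_left (hg a) (prod_pmf_nonneg hp x a)

lemma jointExp_add (x : Fin k → ℕ) (g g' : (Fin k → ℕ) → ℝ) :
    jointExp p x (fun a => g a + g' a) = jointExp p x g + jointExp p x g' := by
  unfold jointExp
  rw [← Finset.sum_add_distrib]
  exact Finset.sum_congr rfl fun a _ => by ring

lemma piFinset_mass (x : Fin k → ℕ) :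
    ∑ a ∈ Fintype.piFinset (fun j => Finset.range (x j + 1)),
      ∏ i, binomPMF (p i) (x i) (a i) = 1 := by
  rw [← Finset.prod_univ_sum]
  rw [Finset.prod_congr rfl (fun i _ => binomPMF_sum (p i) (x i))]
  simp

lemma jointExp_const (x : Fin k → ℕ) (c : ℝ) :
    jointExp p x (fun _ => c) = c := by
  unfold jointExp
  rw [← Finset.sum_mul, piFinset_mass, one_mul]

/-- The key one-step recursion for functionals of the total sum. -/
lemma jointExp_succ (x : Fin k → ℕ) (j : Fin k) (G : ℕ → ℝ) :
    jointExp p (Function.update x j (x j + 1)) (fun a => G (∑ i, a i))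
      = p j * jointExp p x (fun a => G ((∑ i, a i) + 1))
        + (1 - p j) * jointExp p x (fun a => G (∑ i, a i)) := by
  classical
  unfold jointExp
  set R₀ : Fin k → Finset ℕ :=
    Function.update (fun i => Finset.range (x i + 1)) j ({0} : Finset ℕ) with hR₀
  set W : (Fin k → ℕ) → ℝ := fun a => ∏ i ∈ Finset.univ \ {j}, binomPMF (p i) (x i) (a i)
    with hW
  have hzero : ∀ a ∈ Fintype.piFinset R₀, a j = 0 := by
    intro a ha
    rw [Fintype.mem_piFinset] at ha
    have := ha j
    rw [hR₀] at this
    simpa using this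
  -- canonical form for base-x sums
  have hbase : ∀ G' : ℕ → ℝ,
      (∑ a ∈ Fintype.piFinset (fun i => Finset.range (x i + 1)),
        (∏ i, binomPMF (p i) (x i) (a i)) * G' (∑ i, a i))
      = ∑ a ∈ Fintype.piFinset R₀, ∑ t ∈ range (x j + 1),
          binomPMF (p j) (x j) t * (W a * G' (t + ∑ i, a i)) := by
    intro G'
    rw [sum_piFinset_peel (fun i => Finset.range (x i + 1)) j
      (fun a => (∏ i, binomPMF (p i) (x i) (a i)) * G' (∑ i, a i))]
    have hxid : Function.update x j (x j) = x := Function.update_eq_self j x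
    rw [Finset.sum_comm]
    refine Finset.sum_congr rfl fun a ha => Finset.sum_congr rfl fun t ht => ?_
    have h0 := hzero a ha
    have hprod := prod_pmf_update (p := p) x j (x j) a t
    rw [hxid] at hprod
    rw [hprod, sum_update_zero a j t h0]
    rw [hW]
    ring
  -- canonical form for the updated sum
  have hupd :
      (∑ a ∈ Fintype.piFinset (fun i => Finset.range (Function.update x j (x j + 1) i + 1)),
        (∏ i, binomPMF (p i) (Function.update x j (x j + 1) i) (a i)) * G (∑ i, a i))
      = ∑ a ∈ Fintype.piFinset R₀, ∑ t ∈ range (x j + 2),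
          binomPMF (p j) (x j + 1) t * (W a * G (t + ∑ i, a i)) := by
    rw [sum_piFinset_peel (fun i => Finset.range (Function.update x j (x j + 1) i + 1)) j
      (fun a => (∏ i, binomPMF (p i) (Function.update x j (x j + 1) i) (a i)) * G (∑ i, a i))]
    rw [update_range_eq x j (x j + 1), ← hR₀]
    rw [show Function.update x j (x j + 1) j + 1 = x j + 2 from by simp]
    rw [Finset.sum_comm]
    refine Finset.sum_congr rfl fun a ha => Finset.sum_congr rfl fun t ht => ?_
    have h0 := hzero a ha
    rw [prod_pmf_update (p := p) x j (x j + 1) a t, sum_update_zero a j t h0]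
    rw [hW]
    ring
  rw [hupd, hbase (fun s => G (s + 1)), hbase G]
  rw [Finset.mul_sum, Finset.mul_sum, ← Finset.sum_add_distrib]
  refine Finset.sum_congr rfl fun a _ => ?_
  have hbr := binom_rec (p j) (x j) (fun t => W a * G (t + ∑ i, a i))
  rw [show x j + 1 + 1 = x j + 2 from rfl] at hbr
  rw [hbr]
  congr 1
  congr 1
  refine Finset.sum_congr rfl fun t _ => ?_
  congr 3
  omega

end JE2

section JE3

variable {k : ℕ} {p : Fin k → ℝ}

lemma VB_as_G (B : ℕ) (x : Fin k → ℕ) :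
    VB p B x = jointExp p x (fun a => max (((∑ i, a i : ℕ) : ℝ) - B) 0) := by
  unfold VB
  exact jointExp_congr fun a => by push_cast; ring_nf

open Classical in
lemma showTail_as_G (B : ℕ) (x : Fin k → ℕ) :
    showTail p x B = jointExp p x (fun a => if B ≤ ∑ i, a i then (1:ℝ) else 0) := by
  unfold showTail jointProb
  refine jointExp_congr fun a => ?_
  by_cases h : B ≤ ∑ i, a i
  · simp [h]
  · simp [h]

open Classical in
lemma VB_succ (hp : ∀ j, 0 < p j ∧ p j < 1) (B : ℕ) (x : Fin k → ℕ) (j : Fin k) :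
    VB p B (Function.update x j (x j + 1)) = VB p B x + p j * showTail p x B := by
  rw [VB_as_G, VB_as_G, showTail_as_G]
  rw [jointExp_succ x j (fun s => max (((s:ℕ):ℝ) - B) 0)]
  have hpt : ∀ s : ℕ, max (((s+1 : ℕ):ℝ) - B) 0
      = max (((s:ℕ):ℝ) - B) 0 + (if B ≤ s then (1:ℝ) else 0) := by
    intro s
    rcases le_or_gt B s with h | h
    · rw [if_pos h]
      have h1 : ((B:ℝ)) ≤ (s:ℝ) := by exact_mod_cast h
      rw [max_eq_left (by push_cast; linarith), max_eq_left (by push_cast; linarith)]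
      push_cast
      ring
    · rw [if_neg (not_le.mpr h)]
      have h1 : (s:ℝ) + 1 ≤ (B:ℝ) := by exact_mod_cast h
      rw [max_eq_right (by push_cast; linarith), max_eq_right (by push_cast; linarith)]
      ring
  have h2 : jointExp p x (fun a => max ((((∑ i, a i) + 1 : ℕ):ℝ) - B) 0)
      = jointExp p x (fun a => max (((∑ i, a i : ℕ):ℝ) - B) 0)
        + jointExp p x (fun a => if B ≤ ∑ i, a i then (1:ℝ) else 0) := by
    rw [← jointExp_add]
    exact jointExp_congr fun a => hpt (∑ i, a i)
  rw [h2]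
  ring

open Classical in
lemma showTail_succ_le (hp : ∀ j, 0 < p j ∧ p j < 1) (B : ℕ) (x : Fin k → ℕ) (j : Fin k) :
    showTail p (Function.update x j (x j + 1)) B
      ≤ showTail p x B + p j * jointProb p x (fun a => ∑ i, a i = B - 1) := by
  rw [showTail_as_G, showTail_as_G]
  rw [jointExp_succ x j (fun s => if B ≤ s then (1:ℝ) else 0)]
  have hmono : jointExp p x (fun a => if B ≤ (∑ i, a i) + 1 then (1:ℝ) else 0)
      ≤ jointExp p x (fun a => (if B ≤ ∑ i, a i then (1:ℝ) else 0)
          + (if (∑ i, a i) = B - 1 then (1:ℝ) else 0)) := by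
    apply jointExp_mono hp
    intro a
    rcases le_or_gt B (∑ i, a i) with h | h
    · rw [if_pos (by omega), if_pos h]
      have : (0:ℝ) ≤ if (∑ i, a i) = B - 1 then (1:ℝ) else 0 := by positivity
      linarith
    · rw [if_neg (not_le.mpr h)]
      by_cases h2 : B ≤ (∑ i, a i) + 1
      · rw [if_pos h2, if_pos (by omega)]
        have : (0:ℝ) ≤ if B ≤ ∑ i, a i then (1:ℝ) else 0 := by positivity
        linarith
      · rw [if_neg h2]
        positivity
  have hadd : jointExp p x (fun a => (if B ≤ ∑ i, a i then (1:ℝ) else 0)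
          + (if (∑ i, a i) = B - 1 then (1:ℝ) else 0))
      = jointExp p x (fun a => if B ≤ ∑ i, a i then (1:ℝ) else 0)
        + jointExp p x (fun a => if (∑ i, a i) = B - 1 then (1:ℝ) else 0) :=
    jointExp_add x _ _
  rw [hadd] at hmono
  have hPdef : jointProb p x (fun a => ∑ i, a i = B - 1)
      = jointExp p x (fun a => if (∑ i, a i) = B - 1 then (1:ℝ) else 0) := by
    unfold jointProb
    refine jointExp_congr fun a => ?_
    by_cases h : (∑ i, a i) = B - 1
    · simp [h]
    · simp [h]
  have hpj0 : 0 ≤ p j := (hp j).1.le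
  have hpj1 : p j ≤ 1 := (hp j).2.le
  have hT : jointExp p x (fun a => if B ≤ ∑ i, a i then (1:ℝ) else 0)
      ≤ jointExp p x (fun a => if B ≤ (∑ i, a i) + 1 then (1:ℝ) else 0) := by
    apply jointExp_mono hp
    intro a
    rcases le_or_gt B (∑ i, a i) with h | h
    · rw [if_pos h, if_pos (by omega)]
    · rw [if_neg (not_le.mpr h)]
      positivity
  rw [hPdef]
  nlinarith [hT, hmono]

open Classical in
lemma jointProb_nonneg (hp : ∀ j, 0 < p j ∧ p j < 1) (x : Fin k → ℕ)
    (E : (Fin k → ℕ) → Prop) : 0 ≤ jointProb p x E := by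
  unfold jointProb
  apply jointExp_nonneg hp
  intro a
  positivity

lemma VB_nonneg (hp : ∀ j, 0 < p j ∧ p j < 1) (B : ℕ) (x : Fin k → ℕ) :
    0 ≤ VB p B x := by
  unfold VB
  apply jointExp_nonneg hp
  intro a
  positivity

lemma VB_zero (hp : ∀ j, 0 < p j ∧ p j < 1) (B : ℕ) :
    VB p B (fun _ => 0) = 0 := by
  unfold VB jointExp
  apply Finset.sum_eq_zero
  intro a ha
  rw [Fintype.mem_piFinset] at ha
  have h0 : ∀ i, a i = 0 := by
    intro i
    have := ha i
    simpa using this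
  have hs : (∑ i, ((a i : ℝ))) = 0 := by
    apply Finset.sum_eq_zero
    intro i _
    rw [h0 i]
    simp
  dsimp only
  rw [hs, zero_sub, max_eq_right (neg_nonpos.mpr (Nat.cast_nonneg B)), mul_zero]

open Classical in
/-- Point-probability is bounded by any uniform bound on the pmf of one coordinate. -/
lemma jointProb_point_le (hp : ∀ j, 0 < p j ∧ p j < 1) (x : Fin k → ℕ) (c : ℕ)
    (j0 : Fin k) {M : ℝ} (hM : ∀ s, binomPMF (p j0) (x j0) s ≤ M) :
    jointProb p x (fun a => ∑ i, a i = c) ≤ M := by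
  have hM0 : 0 ≤ M := le_trans (binomPMF_nonneg (hp j0).1.le (hp j0).2.le (x j0) 0) (hM 0)
  have hconv : jointProb p x (fun a => ∑ i, a i = c)
      = jointExp p x (fun a => if (∑ i, a i) = c then (1:ℝ) else 0) := by
    unfold jointProb
    refine jointExp_congr fun a => ?_
    by_cases h : (∑ i, a i) = c
    · simp [h]
    · simp [h]
  rw [hconv]
  unfold jointExp
  rw [sum_piFinset_peel (fun i => Finset.range (x i + 1)) j0
    (fun a => (∏ i, binomPMF (p i) (x i) (a i))
      * (if (∑ i, a i) = c then (1:ℝ) else 0))]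
  set R₀ : Fin k → Finset ℕ :=
    Function.update (fun i => Finset.range (x i + 1)) j0 ({0} : Finset ℕ) with hR₀
  set W : (Fin k → ℕ) → ℝ := fun a => ∏ i ∈ Finset.univ \ {j0}, binomPMF (p i) (x i) (a i)
    with hW
  have hzero : ∀ a ∈ Fintype.piFinset R₀, a j0 = 0 := by
    intro a ha
    rw [Fintype.mem_piFinset] at ha
    have := ha j0
    rw [hR₀] at this
    simpa using this
  have hWnn : ∀ a, 0 ≤ W a := by
    intro a
    apply Finset.prod_nonneg
    intro i _
    exact binomPMF_nonneg (hp i).1.le (hp i).2.le _ _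
  rw [Finset.sum_comm]
  have hstep1 : ∀ a ∈ Fintype.piFinset R₀,
      (∑ t ∈ range (x j0 + 1), (∏ i, binomPMF (p i) (x i) (Function.update a j0 t i))
        * (if (∑ i, Function.update a j0 t i) = c then (1:ℝ) else 0))
      ≤ W a * M := by
    intro a ha
    have h0 := hzero a ha
    have heq : ∀ t, (∏ i, binomPMF (p i) (x i) (Function.update a j0 t i))
        * (if (∑ i, Function.update a j0 t i) = c then (1:ℝ) else 0)
        = W a * (binomPMF (p j0) (x j0) t * (if t + ∑ i, a i = c then (1:ℝ) else 0)) := by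
      intro t
      have hprod := prod_pmf_update (p := p) x j0 (x j0) a t
      rw [Function.update_eq_self j0 x] at hprod
      rw [hprod, sum_update_zero a j0 t h0, hW]
      ring
    rw [Finset.sum_congr rfl (fun t _ => heq t), ← Finset.mul_sum]
    apply mul_le_mul_of_nonneg_left _ (hWnn a)
    set w := ∑ i, a i with hw
    have hsum : ∑ t ∈ range (x j0 + 1),
        binomPMF (p j0) (x j0) t * (if t + w = c then (1:ℝ) else 0)
        = ∑ t ∈ (range (x j0 + 1)).filter (fun t => t + w = c),
            binomPMF (p j0) (x j0) t := by
      rw [Finset.sum_filter]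
      exact Finset.sum_congr rfl fun t _ => by
        by_cases h : t + w = c
        · rw [if_pos h, if_pos h, mul_one]
        · rw [if_neg h, if_neg h, mul_zero]
    rw [hsum]
    have hcard : ((range (x j0 + 1)).filter (fun t => t + w = c)).card ≤ 1 := by
      apply Finset.card_le_one.mpr
      intro s hs t ht
      rw [Finset.mem_filter] at hs ht
      omega
    calc ∑ t ∈ (range (x j0 + 1)).filter (fun t => t + w = c), binomPMF (p j0) (x j0) t
        ≤ ((range (x j0 + 1)).filter (fun t => t + w = c)).card • M :=
          Finset.sum_le_card_nsmul _ _ M (fun t _ => hM t)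
      _ ≤ M := by
          rcases Nat.le_one_iff_eq_zero_or_eq_one.mp hcard with h | h
          · rw [h]; simpa using hM0
          · rw [h]; simp
  have hmass : ∑ a ∈ Fintype.piFinset R₀, W a = 1 := by
    have hWg : ∀ a ∈ Fintype.piFinset R₀, W a
        = ∏ i, (if i = j0 then (1:ℝ) else binomPMF (p i) (x i) (a i)) := by
      intro a _
      rw [Finset.prod_eq_mul_prod_sdiff_singleton_of_mem (Finset.mem_univ j0)
        (fun i => if i = j0 then (1:ℝ) else binomPMF (p i) (x i) (a i))]
      rw [if_pos rfl, one_mul, hW]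
      refine Finset.prod_congr rfl fun i hi => ?_
      rw [Finset.mem_sdiff, Finset.mem_singleton] at hi
      rw [if_neg hi.2]
    rw [Finset.sum_congr rfl hWg]
    have := Finset.prod_univ_sum (R₀)
      (fun i s => if i = j0 then (1:ℝ) else binomPMF (p i) (x i) s)
    rw [← this]
    apply Finset.prod_eq_one
    intro i _
    by_cases hij : i = j0
    · subst hij
      rw [hR₀, Function.update_self]
      simp
    · rw [hR₀, Function.update_of_ne hij]
      simp only [if_neg hij]
      exact binomPMF_sum (p i) (x i)
  refine le_trans (Finset.sum_le_sum hstep1) ?_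
  rw [← Finset.sum_mul, hmass, one_mul]

end JE3

/- ### Objective helpers -/
section Obj

variable {k : ℕ} {v p : Fin k → ℝ}

lemma obj_zero_eq (v p : Fin k → ℝ) (B : ℕ) (x : Fin k → ℕ) :
    objFn v p B (fun _ => 0) x = (∑ j, v j * ((x j : ℕ):ℝ)) - VB p B x := by
  unfold objFn
  congr 1
  · refine Finset.sum_congr rfl fun j _ => ?_
    norm_num
  · congr 1
    funext j
    simp

lemma sum_vupdate (v : Fin k → ℝ) (x : Fin k → ℕ) (j : Fin k) (m : ℕ) :
    ∑ i, v i * ((Function.update x j m i : ℕ):ℝ)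
      = (∑ i, v i * ((x i : ℕ):ℝ)) + v j * ((m:ℝ) - ((x j : ℕ):ℝ)) := by
  have hfe : (fun i => v i * ((Function.update x j m i : ℕ):ℝ))
      = Function.update (fun i => v i * ((x i : ℕ):ℝ)) j (v j * (m:ℝ)) := by
    funext i
    by_cases hij : i = j
    · subst hij; simp
    · rw [Function.update_of_ne hij, Function.update_of_ne hij]
  rw [hfe, Finset.sum_update_of_mem (Finset.mem_univ j)]
  rw [Finset.sum_eq_sum_sdiff_singleton_add (Finset.mem_univ j)
    (fun i => v i * ((x i : ℕ):ℝ))]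
  ring

lemma sum_zupdate (w : Fin k → ℤ) (x : Fin k → ℕ) (j : Fin k) (m : ℕ) :
    ∑ i, w i * ((Function.update x j m i : ℕ):ℤ)
      = (∑ i, w i * ((x i : ℕ):ℤ)) + w j * ((m:ℤ) - ((x j : ℕ):ℤ)) := by
  have hfe : (fun i => w i * ((Function.update x j m i : ℕ):ℤ))
      = Function.update (fun i => w i * ((x i : ℕ):ℤ)) j (w j * (m:ℤ)) := by
    funext i
    by_cases hij : i = j
    · subst hij; simp
    · rw [Function.update_of_ne hij, Function.update_of_ne hij]
  rw [hfe, Finset.sum_update_of_mem (Finset.mem_univ j)]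
  rw [Finset.sum_eq_sum_sdiff_singleton_add (Finset.mem_univ j)
    (fun i => w i * ((x i : ℕ):ℤ))]
  ring

lemma obj_marginal (hp : ∀ j, 0 < p j ∧ p j < 1) (B : ℕ) (x : Fin k → ℕ) (j : Fin k) :
    objFn v p B (fun _ => 0) (Function.update x j (x j + 1))
      = objFn v p B (fun _ => 0) x + v j - p j * showTail p x B := by
  rw [obj_zero_eq, obj_zero_eq, sum_vupdate v x j (x j + 1), VB_succ hp B x j]
  push_cast
  ring

end Obj


set_option maxHeartbeats 2000000 in
/-- **Theorem 1 (bounded loss of the clairvoyant index policy).**  There is a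
constant `M1` depending only on `k`, `v`, `p` (independent of `B` and `N`) such that
for all `B` and arrival counts `N`, `OPT(N) − IND(N) ≤ M1`. -/
theorem index_loss_bounded {k : ℕ} (v p : Fin k → ℝ)
    (hk : 1 ≤ k)
    (hp : ∀ j, 0 < p j ∧ p j < 1)
    (hrat : ∀ j, ∃ q : ℚ, p j = (q : ℝ))
    (hv : ∀ j, 0 < v j ∧ v j < p j)
    (hord : ∀ i j : Fin k, i ≤ j → v j / p j ≤ v i / p i)
    (htie : ∀ i j : Fin k, i < j → v i / p i = v j / p j → v j < v i ∧ p j < p i) :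
    ∃ M1 : ℝ, ∀ (B : ℕ) (N : Fin k → ℕ),
      OptVal v p B (fun _ => 0) N - IndOptVal v p B (fun _ => 0) N ≤ M1 := by
  classical
  -- the minimum positive gap between critical ratios
  have hδ : ∃ δ₀ : ℝ, 0 < δ₀ ∧ ∀ i j : Fin k, v i / p i ≠ v j / p j →
      δ₀ ≤ |v i / p i - v j / p j| := by
    set qf : Fin k → ℝ := fun j => v j / p j with hqf
    set Gg : Finset ℝ := ((Finset.univ ×ˢ Finset.univ : Finset (Fin k × Fin k)).filter
      (fun z => qf z.1 ≠ qf z.2)).image (fun z => |qf z.1 - qf z.2|) with hGg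
    by_cases hG : Gg.Nonempty
    · refine ⟨Gg.min' hG, ?_, ?_⟩
      · have hmem2 : Gg.min' hG ∈ ((Finset.univ ×ˢ Finset.univ : Finset (Fin k × Fin k)).filter
            (fun z => qf z.1 ≠ qf z.2)).image (fun z => |qf z.1 - qf z.2|) := by
          rw [← hGg]; exact Gg.min'_mem hG
        obtain ⟨z, hz, hzeq⟩ := Finset.mem_image.mp hmem2
        rw [Finset.mem_filter] at hz
        rw [← hzeq]
        exact abs_pos.mpr (sub_ne_zero.mpr hz.2)
      · intro i j hne
        apply Gg.min'_le
        rw [hGg, Finset.mem_image]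
        exact ⟨(i, j), Finset.mem_filter.mpr ⟨Finset.mem_product.mpr
          ⟨Finset.mem_univ _, Finset.mem_univ _⟩, hne⟩, rfl⟩
    · refine ⟨1, one_pos, ?_⟩
      intro i j hne
      exfalso
      exact hG ⟨|qf i - qf j|, by
        rw [hGg, Finset.mem_image]
        exact ⟨(i, j), Finset.mem_filter.mpr ⟨Finset.mem_product.mpr
          ⟨Finset.mem_univ _, Finset.mem_univ _⟩, hne⟩, rfl⟩⟩
  obtain ⟨δ₀, hδ₀pos, hδ₀le⟩ := hδ
  -- anticoncentration radii
  have hAC : ∀ j : Fin k, ∃ R : ℕ, ∀ n s : ℕ, δ₀/2 ≤ binomPMF (p j) n s → n ≤ R :=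
    fun j => binom_anticonc (hp j).1 (hp j).2 (half_pos hδ₀pos)
  choose Rf hRf using hAC
  set R : ℕ := Finset.univ.sup Rf with hR
  refine ⟨max 0 ((∑ j, v j) * ((R:ℝ) + 1)), ?_⟩
  intro B N
  have hM1nn : (0:ℝ) ≤ max 0 ((∑ j, v j) * ((R:ℝ) + 1)) := le_max_left _ _
  set F : Finset (Fin k → ℕ) := Fintype.piFinset (fun j => Finset.range (N j + 1)) with hF
  have hFiff : ∀ x, x ∈ F ↔ Feasible N x := by
    intro x
    rw [hF, Fintype.mem_piFinset]
    constructor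
    · intro h j; have := h j; rw [Finset.mem_range] at this; omega
    · intro h j; rw [Finset.mem_range]; exact Nat.lt_succ_of_le (h j)
  set S : Set ℝ := {r : ℝ | ∃ x, Feasible N x ∧ r = objFn v p B (fun _ => 0) x} with hS
  have hOPT : OptVal v p B (fun _ => 0) N = sSup S := rfl
  have hSfin : S.Finite := by
    apply Set.Finite.subset (Set.Finite.image (fun x => objFn v p B (fun _ => 0) x)
      F.finite_toSet)
    rintro r ⟨x, hx, rfl⟩
    exact ⟨x, by rwa [Finset.mem_coe, hFiff], rfl⟩
  have hSne : S.Nonempty := ⟨objFn v p B (fun _ => 0) (fun _ => 0),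
    fun _ => 0, fun j => Nat.zero_le _, rfl⟩
  obtain ⟨x₀, hx₀feas, hx₀⟩ := Set.Nonempty.csSup_mem hSne hSfin
  have hub : ∀ x, Feasible N x → objFn v p B (fun _ => 0) x ≤ sSup S :=
    fun x hx => le_csSup hSfin.bddAbove ⟨x, hx, rfl⟩
  -- the tie-broken maximizer
  set Φ : (Fin k → ℕ) → ℤ := fun x => ∑ m, ((k:ℤ) - ((m : Fin k):ℤ)) * ((x m : ℕ):ℤ) with hΦ
  set O : Finset (Fin k → ℕ) := F.filter
    (fun x => sSup S ≤ objFn v p B (fun _ => 0) x) with hO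
  have hOne : O.Nonempty :=
    ⟨x₀, Finset.mem_filter.mpr ⟨(hFiff x₀).mpr hx₀feas, le_of_eq hx₀⟩⟩
  obtain ⟨xs, hxsO, hxmax⟩ := Finset.exists_max_image O Φ hOne
  have hxsfeas : Feasible N xs := (hFiff xs).mp (Finset.mem_filter.mp hxsO).1
  have hOPTxs : objFn v p B (fun _ => 0) xs = sSup S :=
    le_antisymm (hub xs hxsfeas) (Finset.mem_filter.mp hxsO).2
  -- IND ≥ 0
  have hzero_f : objFn v p B (fun _ => 0) (fun _ => 0) = 0 := by
    rw [obj_zero_eq, VB_zero hp B]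
    have h0 : ∑ j : Fin k, v j * (((0:ℕ)):ℝ) = 0 := by
      apply Finset.sum_eq_zero
      intro m _
      norm_num
    rw [h0]
    ring
  have hidx0 : IsIndexSol N (fun _ => 0) := by
    refine ⟨⟨0, hk⟩, fun j hj => absurd hj ?_, fun j _ => rfl⟩
    simp [Fin.lt_def]
  have hTfin : {r : ℝ | ∃ x, Feasible N x ∧ IsIndexSol N x
      ∧ r = objFn v p B (fun _ => 0) x}.Finite := by
    apply hSfin.subset
    rintro r ⟨x, hx, _, rfl⟩
    exact ⟨x, hx, rfl⟩
  have hIND0 : (0:ℝ) ≤ IndOptVal v p B (fun _ => 0) N := by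
    have hmem : (0:ℝ) ∈ {r : ℝ | ∃ x, Feasible N x ∧ IsIndexSol N x
        ∧ r = objFn v p B (fun _ => 0) x} :=
      ⟨fun _ => 0, fun j => Nat.zero_le _, hidx0, hzero_f.symm⟩
    exact le_csSup hTfin.bddAbove hmem
  by_cases hviol : ∃ i j : Fin k, i < j ∧ xs i < N i ∧ 0 < xs j
  case neg =>
    -- xs is an index solution, so OPT ≤ IND
    push_neg at hviol
    have hxs_idx : IsIndexSol N xs := by
      by_cases hpos : ∃ j, 0 < xs j
      · set Fs : Finset (Fin k) := Finset.univ.filter (fun j => 0 < xs j) with hFs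
        have hFsne : Fs.Nonempty := by
          obtain ⟨j, hj⟩ := hpos
          exact ⟨j, Finset.mem_filter.mpr ⟨Finset.mem_univ _, hj⟩⟩
        set t : Fin k := Fs.max' hFsne with ht
        have htpos : 0 < xs t := (Finset.mem_filter.mp (Fs.max'_mem hFsne)).2
        refine ⟨t, fun j hj => ?_, fun j hj => ?_⟩
        · have h1 := hviol j t hj
          have hfeas := hxsfeas j
          omega
        · by_contra h0
          have hmem : j ∈ Fs := Finset.mem_filter.mpr ⟨Finset.mem_univ _, by omega⟩
          have := Fs.le_max' j hmem
          rw [← ht] at this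
          exact absurd hj (not_lt.mpr this)
      · push_neg at hpos
        refine ⟨⟨0, hk⟩, fun j hj => absurd hj ?_, fun j _ => by have := hpos j; omega⟩
        simp [Fin.lt_def]
    have hin : objFn v p B (fun _ => 0) xs ∈ {r : ℝ | ∃ x, Feasible N x ∧ IsIndexSol N x
        ∧ r = objFn v p B (fun _ => 0) x} := ⟨xs, hxsfeas, hxs_idx, rfl⟩
    have hle := le_csSup hTfin.bddAbove hin
    rw [hOPT, ← hOPTxs]
    unfold IndOptVal
    linarith
  case pos =>
    obtain ⟨i, j, hij, hiN, hjpos⟩ := hviol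
    have hinej : i ≠ j := ne_of_lt hij
    set x'' : Fin k → ℕ := Function.update xs j (xs j - 1) with hx''
    have hx''feas : Feasible N x'' := by
      intro m
      rw [hx'']
      by_cases hm : m = j
      · subst hm; rw [Function.update_self]; have := hxsfeas m; omega
      · rw [Function.update_of_ne hm]; exact hxsfeas m
    have hback : Function.update x'' j (x'' j + 1) = xs := by
      rw [hx'', Function.update_self, Function.update_idem,
        show xs j - 1 + 1 = xs j from by omega, Function.update_eq_self]
    -- local optimality conditions
    have hTi : v i ≤ p i * showTail p xs B := by
      have hyfeas : Feasible N (Function.update xs i (xs i + 1)) := by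
        intro m
        by_cases hm : m = i
        · subst hm; rw [Function.update_self]; omega
        · rw [Function.update_of_ne hm]; exact hxsfeas m
      have h1 := hub _ hyfeas
      have h2 := obj_marginal (v := v) hp B xs i
      linarith [h1, h2, hOPTxs]
    have hTj : p j * showTail p x'' B ≤ v j := by
      have h1 := hub _ hx''feas
      have h2 := obj_marginal (v := v) hp B x'' j
      rw [hback] at h2
      linarith [h1, h2, hOPTxs]
    have hTdiff := showTail_succ_le hp B x'' j
    rw [hback] at hTdiff
    set Pq : ℝ := jointProb p x'' (fun a => ∑ m, a m = B - 1) with hPq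
    have hPnn : 0 ≤ Pq := jointProb_nonneg hp x'' _
    have hq_i_le : v i / p i ≤ showTail p xs B := by
      rw [div_le_iff₀ (hp i).1]
      linarith [hTi]
    have hq_j_ge : showTail p x'' B ≤ v j / p j := by
      rw [le_div_iff₀ (hp j).1]
      linarith [hTj]
    have htot : v i / p i - v j / p j ≤ Pq := by
      have h1 : v i / p i - v j / p j ≤ p j * Pq := by linarith
      nlinarith [(hp j).1, (hp j).2, hPnn]
    by_cases hqe : v i / p i = v j / p j
    · -- tie: swap improves Φ, contradiction
      obtain ⟨hvij, hpij⟩ := htie i j hij hqe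
      set x' : Fin k → ℕ := Function.update x'' i (x'' i + 1) with hx'
      have hx''i : x'' i = xs i := by rw [hx'', Function.update_of_ne hinej]
      have hx'feas : Feasible N x' := by
        intro m
        by_cases hm : m = i
        · subst hm; rw [hx', Function.update_self, hx''i]; omega
        · rw [hx', Function.update_of_ne hm]; exact hx''feas m
      have hobj' := obj_marginal (v := v) hp B x'' i
      rw [← hx'] at hobj'
      have hobjs := obj_marginal (v := v) hp B x'' j
      rw [hback] at hobjs
      -- f x' ≥ f xs
      have hge : objFn v p B (fun _ => 0) xs ≤ objFn v p B (fun _ => 0) x' := by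
        have hvi : v i = (v j / p j) * p i := by
          rw [← hqe, div_mul_cancel₀ _ (ne_of_gt (hp i).1)]
        have hvj : v j = (v j / p j) * p j :=
          (div_mul_cancel₀ _ (ne_of_gt (hp j).1)).symm
        nlinarith [hq_j_ge, hpij, hobj', hobjs]
      have hx'O : x' ∈ O := Finset.mem_filter.mpr ⟨(hFiff x').mpr hx'feas, by
        rw [← hOPTxs]; exact hge⟩
      have hΦle := hxmax x' hx'O
      -- but Φ x' > Φ xs
      have hΦ'' : Φ x'' = Φ xs + ((k:ℤ) - ((j : Fin k):ℤ)) * (((xs j - 1 : ℕ):ℤ) - ((xs j : ℕ):ℤ)) := by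
        rw [hΦ, hx'']
        exact sum_zupdate _ xs j (xs j - 1)
      have hΦ' : Φ x' = Φ x'' + ((k:ℤ) - ((i : Fin k):ℤ)) * (((x'' i + 1 : ℕ):ℤ) - ((x'' i : ℕ):ℤ)) := by
        rw [hΦ, hx']
        exact sum_zupdate _ x'' i (x'' i + 1)
      have hcast1 : ((xs j - 1 : ℕ):ℤ) = ((xs j : ℕ):ℤ) - 1 := by omega
      have hcast2 : ((x'' i + 1 : ℕ):ℤ) = ((x'' i : ℕ):ℤ) + 1 := by push_cast; ring
      have hik : ((i : Fin k):ℤ) < ((j : Fin k):ℤ) := by exact_mod_cast hij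
      have hjk : ((j : Fin k):ℤ) < (k:ℤ) := by exact_mod_cast j.isLt
      have hcontra : Φ xs < Φ x' := by
        rw [hΦ', hΦ'', hcast1, hcast2]
        nlinarith [hik, hjk]
      omega
    · -- strict gap: the solution is small
      have hqlt : v j / p j < v i / p i := lt_of_le_of_ne (hord i j hij.le)
        (fun h => hqe h.symm)
      have hgap : δ₀ ≤ v i / p i - v j / p j := by
        have := hδ₀le i j hqe
        rwa [abs_of_pos (by linarith)] at this
      have hPbig : δ₀ ≤ Pq := le_trans hgap htot
      have hcoord : ∀ m, x'' m ≤ R := by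
        intro m
        by_contra hbig
        have hRm : Rf m < x'' m := by
          have : Rf m ≤ R := Finset.le_sup (Finset.mem_univ m)
          omega
        have hsmall : ∀ s, binomPMF (p m) (x'' m) s ≤ δ₀/2 := by
          intro s
          by_contra hs
          push_neg at hs
          exact absurd (hRf m (x'' m) s hs.le) (by omega)
        have hple := jointProb_point_le hp x'' (B - 1) m hsmall
        rw [← hPq] at hple
        linarith
      -- bound OPT
      have hxs_small : ∀ m, xs m ≤ R + 1 := by
        intro m
        by_cases hm : m = j
        · subst hm
          have := hcoord m
          rw [hx'', Function.update_self] at this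
          omega
        · have := hcoord m
          rw [hx'', Function.update_of_ne hm] at this
          omega
      have hVB := VB_nonneg hp B xs
      have hsum_le : ∑ m, v m * ((xs m : ℕ):ℝ) ≤ (∑ m, v m) * ((R:ℝ) + 1) := by
        rw [Finset.sum_mul]
        apply Finset.sum_le_sum
        intro m _
        have h1 : ((xs m : ℕ):ℝ) ≤ (R:ℝ) + 1 := by
          have h2 := hxs_small m
          have h3 : ((xs m : ℕ):ℝ) ≤ ((R + 1 : ℕ):ℝ) := by exact_mod_cast h2
          push_cast at h3
          linarith
        have h2 := (hv m).1.le
        nlinarith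
      have hOPTle : sSup S ≤ (∑ m, v m) * ((R:ℝ) + 1) := by
        rw [← hOPTxs, obj_zero_eq]
        linarith
      rw [hOPT]
      have hmr := le_max_right (0:ℝ) ((∑ m, v m) * ((R:ℝ) + 1))
      linarith
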